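/- Let v(q) = (a + λ)·J₀(q) on [0, q̄] with a ∈ (-1,1], c := J₀(q̄) ∈ (-1,0), λ = (a·c+1)/(1−c), and u(r) := v(r/ε) − λ. Then the scaled energy contribution (1/(ε·πR₀²))·∫_{B_{R₀}} ((1 − u²) + ε²|∇u|²) dx, where u is extended by -1 outside radius ε·q̄ and is radial, equals (ε·q̄²/R₀²)·(1 − λ²), provided the identity ∫_0^{q̄} ((1 − (v(q)−λ)²) + (v'(q))²)·q dq = (q̄²/2)·(1 − λ²) holds; prove this integral identity. -/
import Mathlib


open Set

/-- Energy identity for the dimple solution `v(q) = (a+λ) J₀(q)`: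
`∫_0^{q̄} ((1 - (v-λ)²) + (v')²) q dq = (q̄²/2)(1 - λ²)`. -/
theorem dimple_energy_identity
    (J₀ J₀d J₀dd : ℝ → ℝ)
    (hJd : ∀ x, HasDerivAt J₀ (J₀d x) x)
    (hJdd : ∀ x, HasDerivAt J₀d (J₀dd x) x)
    (qbar : ℝ) (hqbar : 0 < qbar)
    (hODE : ∀ x ∈ Ioo (0:ℝ) qbar, x * J₀dd x + J₀d x + x * J₀ x = 0)
    (hJ00 : J₀ 0 = 1) (hJd0 : J₀d 0 = 0) (hJdqbar : J₀d qbar = 0)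
    (hc : J₀ qbar ∈ Ioo (-1 : ℝ) 0)
    (a : ℝ) (ha : a ∈ Ioc (-1 : ℝ) 1)
    (lam : ℝ) (hlam : lam = (a * J₀ qbar + 1) / (1 - J₀ qbar)) :
    ∫ q in (0:ℝ)..qbar,
        ((1 - ((a + lam) * J₀ q - lam) ^ 2) + ((a + lam) * J₀d q) ^ 2) * q
      = qbar ^ 2 / 2 * (1 - lam ^ 2) := by
  have hJc : Continuous J₀ := continuous_iff_continuousAt.mpr fun x => (hJd x).continuousAt
  have hJdc : Continuous J₀d := continuous_iff_continuousAt.mpr fun x => (hJdd x).continuousAt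
  -- First key identity: ∫ q * J₀ q = 0
  have key1 : ∫ q in (0:ℝ)..qbar, -(q * J₀ q) =
      qbar * J₀d qbar - 0 * J₀d 0 := by
    apply intervalIntegral.integral_eq_sub_of_hasDeriv_right_of_le hqbar.le
    · exact (continuous_id.mul hJdc).continuousOn
    · intro x hx
      have h : HasDerivAt (fun q => q * J₀d q) (1 * J₀d x + x * J₀dd x) x :=
        (hasDerivAt_id x).mul (hJdd x)
      have he : 1 * J₀d x + x * J₀dd x = -(x * J₀ x) := by
        have := hODE x hx; linarith
      rw [he] at h
      exact h.hasDerivWithinAt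
    · exact ((continuous_id.mul hJc).neg).intervalIntegrable _ _
  have H1 : ∫ q in (0:ℝ)..qbar, q * J₀ q = 0 := by
    rw [intervalIntegral.integral_neg, hJdqbar] at key1
    linarith
  -- Second key identity: ∫ (J₀d² - J₀²) * q = 0
  have key2 : ∫ q in (0:ℝ)..qbar, (J₀d q ^ 2 - J₀ q ^ 2) * q =
      qbar * J₀d qbar * J₀ qbar - 0 * J₀d 0 * J₀ 0 := by
    apply intervalIntegral.integral_eq_sub_of_hasDeriv_right_of_le hqbar.le
    · exact ((continuous_id.mul hJdc).mul hJc).continuousOn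
    · intro x hx
      have h : HasDerivAt (fun q => q * J₀d q * J₀ q)
          ((1 * J₀d x + x * J₀dd x) * J₀ x + (x * J₀d x) * J₀d x) x :=
        ((hasDerivAt_id x).mul (hJdd x)).mul (hJd x)
      have he : (1 * J₀d x + x * J₀dd x) * J₀ x + (x * J₀d x) * J₀d x
          = (J₀d x ^ 2 - J₀ x ^ 2) * x := by
        have h0 := hODE x hx
        linear_combination J₀ x * h0
      rw [he] at h
      exact h.hasDerivWithinAt
    · exact (((hJdc.pow 2).sub (hJc.pow 2)).mul continuous_id).intervalIntegrable _ _
  have H2 : ∫ q in (0:ℝ)..qbar, (J₀d q ^ 2 - J₀ q ^ 2) * q = 0 := by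
    rw [key2, hJdqbar]; ring
  -- integrability facts
  have int1 : IntervalIntegrable (fun q : ℝ => (1 - lam ^ 2) * q) MeasureTheory.volume 0 qbar :=
    (continuous_const.mul continuous_id).intervalIntegrable _ _
  have int2 : IntervalIntegrable (fun q : ℝ => 2 * lam * (a + lam) * (q * J₀ q))
      MeasureTheory.volume 0 qbar :=
    (continuous_const.mul (continuous_id.mul hJc)).intervalIntegrable _ _
  have int3 : IntervalIntegrable (fun q : ℝ => (a + lam) ^ 2 * ((J₀d q ^ 2 - J₀ q ^ 2) * q))
      MeasureTheory.volume 0 qbar :=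
    (continuous_const.mul (((hJdc.pow 2).sub (hJc.pow 2)).mul continuous_id)).intervalIntegrable _ _
  calc ∫ q in (0:ℝ)..qbar,
        ((1 - ((a + lam) * J₀ q - lam) ^ 2) + ((a + lam) * J₀d q) ^ 2) * q
      = ∫ q in (0:ℝ)..qbar,
        ((1 - lam ^ 2) * q + 2 * lam * (a + lam) * (q * J₀ q)
          + (a + lam) ^ 2 * ((J₀d q ^ 2 - J₀ q ^ 2) * q)) := by
        apply intervalIntegral.integral_congr
        intro x _
        ring
    _ = qbar ^ 2 / 2 * (1 - lam ^ 2) := by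
        rw [intervalIntegral.integral_add (int1.add int2) int3,
          intervalIntegral.integral_add int1 int2,
          intervalIntegral.integral_const_mul, intervalIntegral.integral_const_mul,
          intervalIntegral.integral_const_mul, H1, H2, integral_id]
        ring
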